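/- arXiv:1310.0959 — 3 statements merged into one kernel-verified Lean document; each statement's English description precedes it below -/
import Mathlib

section
/- Let (L,[,],d) be a differential graded Lie algebra over a field of characteristic zero in which every element of L^0 is ad-nilpotent and L^0 is abelian. The relation on L^1 defined by l ∼ l' iff there exists β ∈ L^0 with l' = e^{ad_β}(l) + g_β, where g_β = −∑_{n≥0} (1/(n+1)!) ad_β^n(dβ), is an equivalence relation. -/
/-- A differential graded Lie algebra over a field `K` of characteristic zero:
a graded Lie algebra together with a square-zero degree-one derivation `d`. -/
structure DGLA (K : Type) [Field K] (L : Type) [AddCommGroup L] [Module K L] where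
  bracket : L →ₗ[K] L →ₗ[K] L
  grade : ℤ → Submodule K L
  internal : DirectSum.IsInternal grade
  bracket_grade : ∀ i j : ℤ, ∀ x ∈ grade i, ∀ y ∈ grade j, bracket x y ∈ grade (i + j)
  antisymm : ∀ i j : ℤ, ∀ x ∈ grade i, ∀ y ∈ grade j,
    bracket x y = -(((-1 : K) ^ (i * j)) • bracket y x)
  leibniz : ∀ i j : ℤ, ∀ x ∈ grade i, ∀ y ∈ grade j, ∀ z : L,
    bracket x (bracket y z) =
      bracket (bracket x y) z + ((-1 : K) ^ (i * j)) • bracket y (bracket x z)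
  d : L →ₗ[K] L
  d_grade : ∀ i : ℤ, ∀ x ∈ grade i, d x ∈ grade (i + 1)
  d_der : ∀ i : ℤ, ∀ x ∈ grade i, ∀ y : L,
    d (bracket x y) = bracket (d x) y + ((-1 : K) ^ i) • bracket x (d y)
  d_sq : ∀ x : L, d (d x) = 0

variable {K : Type} [Field K] {L : Type} [AddCommGroup L] [Module K L]

open scoped Classical in
/-- `nilSum c f x = ∑_{n≥0} c n • fⁿ x`, a finite sum when `f` is pointwise nilpotent at
`x` (the terms vanish from the first `n` with `fⁿ x = 0` on). -/
noncomputable def nilSum (c : ℕ → K) (f : Module.End K L) (x : L) : L :=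
  if h : ∃ n : ℕ, (f ^ n) x = 0 then
    ∑ n ∈ Finset.range (Nat.find h), c n • (f ^ n) x
  else 0

/-- `e^{ad_β}` applied to `x`. -/
noncomputable def expAd (A : DGLA K L) (β x : L) : L :=
  nilSum (fun n => ((Nat.factorial n : K))⁻¹) (A.bracket β) x

/-- The gauge term `g_β = −∑_{n≥0} (1/(n+1)!) ad_β^n (dβ)`. -/
noncomputable def gaugeTerm (A : DGLA K L) (β : L) : L :=
  -nilSum (fun n => ((Nat.factorial (n + 1) : K))⁻¹) (A.bracket β) (A.d β)


lemma pow_apply_zero_of_le {f : Module.End K L} {x : L} {m n : ℕ}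
    (hm : (f ^ m) x = 0) (h : m ≤ n) : (f ^ n) x = 0 := by
  obtain ⟨k, rfl⟩ := Nat.exists_eq_add_of_le h
  rw [add_comm, pow_add, Module.End.mul_apply, hm, map_zero]

open scoped Classical in
lemma nilSum_eq {c : ℕ → K} {f : Module.End K L} {x : L} {N : ℕ}
    (hN : (f ^ N) x = 0) :
    nilSum c f x = ∑ n ∈ Finset.range N, c n • (f ^ n) x := by
  have h : ∃ n : ℕ, (f ^ n) x = 0 := ⟨N, hN⟩
  rw [nilSum, dif_pos h]
  refine Finset.sum_subset (Finset.range_subset_range.2 (Nat.find_le hN)) ?_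
  intro n _ hn
  rw [pow_apply_zero_of_le (Nat.find_spec h) (Nat.le_of_not_lt (by simpa using hn)),
    smul_zero]

lemma factorial_coeff [CharZero K] {i n : ℕ} (h : i ≤ n) :
    ((n.factorial : K))⁻¹ * (n.choose i : K)
      = ((i.factorial : K))⁻¹ * (((n - i).factorial : K))⁻¹ := by
  have := Nat.choose_mul_factorial_mul_factorial h
  have h1 : (n.factorial : K) ≠ 0 := Nat.cast_ne_zero.2 n.factorial_ne_zero
  have h2 : (i.factorial : K) ≠ 0 := Nat.cast_ne_zero.2 i.factorial_ne_zero
  have h3 : (((n - i).factorial : K)) ≠ 0 := Nat.cast_ne_zero.2 (n - i).factorial_ne_zero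
  field_simp
  have : ((n.choose i : ℕ) : K) * (i.factorial : K) * ((n - i).factorial : K)
      = (n.factorial : K) := by exact_mod_cast congrArg (Nat.cast : ℕ → K) this
  linear_combination this

lemma nilSum_exp_add [CharZero K] {f g : Module.End K L} (hcomm : Commute f g)
    (hf : ∀ y : L, ∃ n : ℕ, (f ^ n) y = 0) (hg : ∀ y : L, ∃ n : ℕ, (g ^ n) y = 0)
    (x : L) :
    nilSum (fun n => ((Nat.factorial n : K))⁻¹) g
        (nilSum (fun n => ((Nat.factorial n : K))⁻¹) f x)
      = nilSum (fun n => ((Nat.factorial n : K))⁻¹) (f + g) x := by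
  classical
  obtain ⟨a, ha⟩ := hf x
  obtain ⟨b, hb⟩ : ∃ b : ℕ, ∀ k < a, (g ^ b) ((f ^ k) x) = 0 :=
    ⟨(Finset.range a).sup (fun k => Nat.find (hg ((f ^ k) x))), fun k hk =>
      pow_apply_zero_of_le (Nat.find_spec (hg ((f ^ k) x)))
        (Finset.le_sup (f := fun k => Nat.find (hg ((f ^ k) x))) (Finset.mem_range.2 hk))⟩
  set F : ℕ × ℕ → L := fun p =>
    ((p.1.factorial : K))⁻¹ • ((p.2.factorial : K))⁻¹ • (g ^ p.2) ((f ^ p.1) x) with hF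
  have hFz : ∀ p : ℕ × ℕ, a ≤ p.1 ∨ b ≤ p.2 → F p = 0 := by
    rintro ⟨i, j⟩ (h | h)
    · simp [hF, pow_apply_zero_of_le ha h]
    · by_cases hi : i < a
      · simp [hF, pow_apply_zero_of_le (hb i hi) h]
      · simp [hF, pow_apply_zero_of_le ha (le_of_not_gt hi)]
  -- LHS
  have hin : nilSum (fun n => ((Nat.factorial n : K))⁻¹) f x
      = ∑ k ∈ Finset.range a, ((k.factorial : K))⁻¹ • (f ^ k) x := nilSum_eq ha
  have hgb : (g ^ b) (∑ k ∈ Finset.range a, ((k.factorial : K))⁻¹ • (f ^ k) x) = 0 := by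
    rw [map_sum]
    refine Finset.sum_eq_zero fun k hk => ?_
    rw [map_smul, hb k (Finset.mem_range.1 hk), smul_zero]
  have hLHS : nilSum (fun n => ((Nat.factorial n : K))⁻¹) g
        (nilSum (fun n => ((Nat.factorial n : K))⁻¹) f x)
      = ∑ j ∈ Finset.range b, ∑ k ∈ Finset.range a, F (k, j) := by
    rw [hin, nilSum_eq hgb]
    refine Finset.sum_congr rfl fun j _ => ?_
    rw [map_sum, Finset.smul_sum]
    refine Finset.sum_congr rfl fun k _ => ?_
    rw [map_smul, smul_comm]
  -- RHS
  have key : ∀ n : ℕ, ((f + g) ^ n) x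
      = ∑ i ∈ Finset.range (n + 1), (n.choose i) • (g ^ (n - i)) ((f ^ i) x) := by
    intro n
    rw [hcomm.add_pow, LinearMap.sum_apply]
    refine Finset.sum_congr rfl fun i _ => ?_
    have e1 : f ^ i * g ^ (n - i) * (↑(n.choose i) : Module.End K L)
        = (↑(n.choose i) : Module.End K L) * (g ^ (n - i) * f ^ i) := by
      rw [(hcomm.pow_pow i (n - i)).eq,
        ← (Nat.cast_commute (n.choose i) (g ^ (n - i) * f ^ i)).eq]
    rw [e1, Module.End.mul_apply, Module.End.mul_apply, Module.End.natCast_apply]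
  have hab : ((f + g) ^ (a + b)) x = 0 := by
    rw [key]
    refine Finset.sum_eq_zero fun i _ => ?_
    rcases le_or_gt a i with h | h
    · rw [pow_apply_zero_of_le ha h, map_zero, smul_zero]
    · rw [pow_apply_zero_of_le (hb i h) (by omega), smul_zero]
  have hRHS : nilSum (fun n => ((Nat.factorial n : K))⁻¹) (f + g) x
      = ∑ n ∈ Finset.range (a + b), ∑ i ∈ Finset.range (n + 1), F (i, n - i) := by
    rw [nilSum_eq hab]
    refine Finset.sum_congr rfl fun n _ => ?_
    rw [key, Finset.smul_sum]
    refine Finset.sum_congr rfl fun i hi => ?_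
    have hi' : i ≤ n := Nat.lt_succ_iff.1 (Finset.mem_range.1 hi)
    rw [hF]
    simp only [← Nat.cast_smul_eq_nsmul K, smul_smul]
    rw [factorial_coeff hi']
  -- reindex the triangle
  rw [hLHS, hRHS]
  have h1 : ∀ n : ℕ, ∑ i ∈ Finset.range (n + 1), F (i, n - i)
      = ∑ p ∈ Finset.HasAntidiagonal.antidiagonal n, F p :=
    fun n => (Finset.Nat.sum_antidiagonal_eq_sum_range_succ_mk F n).symm
  have hdisj : (↑(Finset.range (a + b)) : Set ℕ).PairwiseDisjoint Finset.HasAntidiagonal.antidiagonal := by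
    intro m _ n _ hmn
    simp only [Finset.disjoint_left, Finset.HasAntidiagonal.mem_antidiagonal]
    intro p hp hp'
    exact hmn (hp ▸ hp')
  have h2 : ∑ n ∈ Finset.range (a + b), ∑ p ∈ Finset.HasAntidiagonal.antidiagonal n, F p
      = ∑ p ∈ (Finset.range (a + b)).biUnion Finset.HasAntidiagonal.antidiagonal, F p :=
    (Finset.sum_biUnion hdisj).symm
  have hsub : Finset.range a ×ˢ Finset.range b ⊆
      (Finset.range (a + b)).biUnion Finset.HasAntidiagonal.antidiagonal := by
    rintro ⟨i, j⟩ hp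
    rw [Finset.mem_product, Finset.mem_range, Finset.mem_range] at hp
    rw [Finset.mem_biUnion]
    exact ⟨i + j, Finset.mem_range.2 (by omega), Finset.HasAntidiagonal.mem_antidiagonal.2 rfl⟩
  have h3 : ∑ p ∈ (Finset.range (a + b)).biUnion Finset.HasAntidiagonal.antidiagonal, F p
      = ∑ p ∈ Finset.range a ×ˢ Finset.range b, F p := by
    refine (Finset.sum_subset hsub fun p _ hp => ?_).symm
    refine hFz p ?_
    rw [Finset.mem_product, Finset.mem_range, Finset.mem_range] at hp
    omega
  simp only [h1]
  rw [h2, h3, Finset.sum_product]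
  exact Finset.sum_comm.symm

section Ext

variable [CharZero K] (A : DGLA K L)

/-- ad-operators of degree-0 elements commute. -/
lemma ad_comm (habel : ∀ β ∈ A.grade 0, ∀ β' ∈ A.grade 0, A.bracket β β' = 0)
    {β β' : L} (hβ : β ∈ A.grade 0) (hβ' : β' ∈ A.grade 0) (z : L) :
    A.bracket β (A.bracket β' z) = A.bracket β' (A.bracket β z) := by
  have h := A.leibniz 0 0 β hβ β' hβ' z
  rw [habel β hβ β' hβ'] at h
  simpa using h

lemma ad_d_comm (habel : ∀ β ∈ A.grade 0, ∀ β' ∈ A.grade 0, A.bracket β β' = 0)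
    {β β' : L} (hβ : β ∈ A.grade 0) (hβ' : β' ∈ A.grade 0) :
    A.bracket β (A.d β') = A.bracket β' (A.d β) := by
  have h := A.d_der 0 β hβ β'
  rw [habel β hβ β' hβ', map_zero] at h
  have h2 := A.antisymm 1 0 (A.d β) (by simpa using A.d_grade 0 β hβ) β' hβ'
  rw [h2] at h
  simp only [zpow_zero, one_smul, mul_zero] at h
  have := h.symm
  rw [neg_add_eq_zero] at this
  exact this.symm

/-- The extended operator on `L × K` encoding `x ↦ [β,x]` together with the
gauge correction coming from `dβ`. -/
noncomputable def extAd (β : L) : Module.End K (L × K) where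
  toFun p := (A.bracket β p.1 - p.2 • A.d β, 0)
  map_add' p q := by
    ext
    · simp [add_smul]; abel
    · simp
  map_smul' c p := by
    ext
    · simp [smul_sub, smul_smul]
    · simp

@[simp] lemma extAd_apply (β : L) (x : L) (t : K) :
    extAd A β (x, t) = (A.bracket β x - t • A.d β, 0) := rfl

lemma extAd_pow_succ (β : L) (n : ℕ) (x : L) (t : K) :
    ((extAd A β) ^ (n + 1)) (x, t)
      = (((A.bracket β) ^ (n + 1)) x - t • ((A.bracket β) ^ n) (A.d β), 0) := by
  induction n generalizing x t with
  | zero => simp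
  | succ n ih =>
    rw [pow_succ', Module.End.mul_apply, extAd_apply, ih]
    rw [zero_smul, sub_zero, map_sub, map_smul]
    simp [pow_succ', Module.End.mul_apply]

lemma extAd_add (β β' : L) : extAd A (β + β') = extAd A β + extAd A β' := by
  refine LinearMap.ext fun p => ?_
  obtain ⟨x, t⟩ := p
  simp only [LinearMap.add_apply, extAd_apply, map_add, LinearMap.add_apply,
    smul_add, Prod.mk_add_mk, Prod.ext_iff]
  refine ⟨by abel, by simp⟩

lemma extAd_comm (habel : ∀ β ∈ A.grade 0, ∀ β' ∈ A.grade 0, A.bracket β β' = 0)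
    {β β' : L} (hβ : β ∈ A.grade 0) (hβ' : β' ∈ A.grade 0) :
    Commute (extAd A β) (extAd A β') := by
  refine LinearMap.ext fun p => ?_
  obtain ⟨x, t⟩ := p
  simp only [Module.End.mul_apply, Module.End.mul_eq_comp, LinearMap.comp_apply, extAd_apply]
  rw [map_sub, map_sub, map_smul, map_smul]
  simp only [zero_smul, sub_zero]
  rw [ad_comm A habel hβ hβ' x, ad_d_comm A habel hβ hβ']

lemma extAd_nil (hnil : ∀ β ∈ A.grade 0, ∀ x : L, ∃ n : ℕ, ((A.bracket β) ^ n) x = 0)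
    {β : L} (hβ : β ∈ A.grade 0) (p : L × K) :
    ∃ n : ℕ, ((extAd A β) ^ n) p = 0 := by
  obtain ⟨x, t⟩ := p
  obtain ⟨n₁, h₁⟩ := hnil β hβ x
  obtain ⟨n₂, h₂⟩ := hnil β hβ (A.d β)
  refine ⟨max n₁ n₂ + 1, ?_⟩
  rw [extAd_pow_succ,
    pow_apply_zero_of_le h₁ (le_trans (le_max_left _ _) (Nat.le_succ _)),
    pow_apply_zero_of_le h₂ (le_max_right _ _)]
  simp

lemma extAd_eval (hnil : ∀ β ∈ A.grade 0, ∀ x : L, ∃ n : ℕ, ((A.bracket β) ^ n) x = 0)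
    {β : L} (hβ : β ∈ A.grade 0) (l : L) :
    nilSum (fun n => ((Nat.factorial n : K))⁻¹) (extAd A β) (l, 1)
      = (expAd A β l + gaugeTerm A β, (1 : K)) := by
  obtain ⟨n₁, h₁⟩ := hnil β hβ l
  obtain ⟨n₂, h₂⟩ := hnil β hβ (A.d β)
  set M := max n₁ n₂ with hM
  have hN : ((extAd A β) ^ (M + 1)) (l, 1) = 0 := by
    rw [extAd_pow_succ,
      pow_apply_zero_of_le h₁ (le_trans (le_max_left _ _) (Nat.le_succ _)),
      pow_apply_zero_of_le h₂ (le_max_right _ _)]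
    simp
  rw [nilSum_eq hN]
  have hexp : expAd A β l
      = ∑ n ∈ Finset.range (M + 1), ((Nat.factorial n : K))⁻¹ • ((A.bracket β) ^ n) l := by
    rw [expAd, nilSum_eq (pow_apply_zero_of_le h₁ (le_trans (le_max_left _ _) (Nat.le_succ _)))]
  have hgauge : gaugeTerm A β
      = -∑ n ∈ Finset.range M, ((Nat.factorial (n + 1) : K))⁻¹ • ((A.bracket β) ^ n) (A.d β) := by
    rw [gaugeTerm, nilSum_eq (pow_apply_zero_of_le h₂ (le_max_right _ _))]
  rw [hexp, hgauge, Finset.sum_range_succ', Finset.sum_range_succ']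
  simp only [extAd_pow_succ, pow_zero, Module.End.one_apply, Nat.factorial_zero,
    Nat.cast_one, inv_one, one_smul]
  rw [Prod.ext_iff]
  constructor
  · simp only [Prod.fst_add, Prod.fst_sum, Prod.smul_fst, Prod.mk.injEq]
    rw [Finset.sum_congr rfl (fun n _ => smul_sub ((Nat.factorial (n+1) : K))⁻¹
      (((A.bracket β) ^ (n+1)) l) (((A.bracket β) ^ n) (A.d β))), Finset.sum_sub_distrib]
    abel
  · simp only [Prod.snd_add, Prod.snd_sum, Prod.smul_snd]
    simp



lemma gaugeComp
    (hnil : ∀ β ∈ A.grade 0, ∀ x : L, ∃ n : ℕ, ((A.bracket β) ^ n) x = 0)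
    (habel : ∀ β ∈ A.grade 0, ∀ β' ∈ A.grade 0, A.bracket β β' = 0)
    {β β' : L} (hβ : β ∈ A.grade 0) (hβ' : β' ∈ A.grade 0) (l : L) :
    expAd A β' (expAd A β l + gaugeTerm A β) + gaugeTerm A β'
      = expAd A (β + β') l + gaugeTerm A (β + β') := by
  have h1 := extAd_eval A hnil hβ l
  have h2 := extAd_eval A hnil hβ' (expAd A β l + gaugeTerm A β)
  have h3 := extAd_eval A hnil (add_mem hβ hβ' : β + β' ∈ A.grade 0) l
  have hcomp := nilSum_exp_add (extAd_comm A habel hβ hβ')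
    (extAd_nil A hnil hβ) (extAd_nil A hnil hβ') ((l, 1) : L × K)
  rw [h1, h2, ← extAd_add, h3] at hcomp
  exact congrArg Prod.fst hcomp

lemma gaugeZero (l : L) : expAd A 0 l + gaugeTerm A 0 = l := by
  have hb : A.bracket (0 : L) = 0 := map_zero _
  have h1 : expAd A 0 l = l := by
    rw [expAd, hb, nilSum_eq (N := 1) (by simp)]
    simp
  have h2 : gaugeTerm A 0 = 0 := by
    rw [gaugeTerm, hb, map_zero, nilSum_eq (N := 0) (by simp)]
    simp
  rw [h1, h2, add_zero]

end Ext

/- STATEMENT 1: if every element of L⁰ is ad-nilpotent and L⁰ is abelian, then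
   l ∼ l' ⟺ ∃ β ∈ L⁰, l' = e^{ad_β}(l) + g_β  is an equivalence relation on L¹. -/
theorem gauge_relation_is_equivalence
    [CharZero K] (A : DGLA K L)
    (hnil : ∀ β ∈ A.grade 0, ∀ x : L, ∃ n : ℕ, ((A.bracket β) ^ n) x = 0)
    (habel : ∀ β ∈ A.grade 0, ∀ β' ∈ A.grade 0, A.bracket β β' = 0) :
    Equivalence (fun l l' : A.grade 1 =>
      ∃ β ∈ A.grade 0, (l' : L) = expAd A β (l : L) + gaugeTerm A β) := by
  constructor
  · intro l
    exact ⟨0, (A.grade 0).zero_mem, (gaugeZero A (l : L)).symm⟩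
  · rintro l l' ⟨β, hβ, h⟩
    refine ⟨-β, neg_mem hβ, ?_⟩
    rw [h, gaugeComp A hnil habel hβ (neg_mem hβ), add_neg_cancel, gaugeZero]
  · rintro l l' l'' ⟨β, hβ, h⟩ ⟨β', hβ', h'⟩
    refine ⟨β + β', add_mem hβ hβ', ?_⟩
    rw [h', h, gaugeComp A hnil habel hβ hβ']
end

section
/- Let g, h be Lie algebras and L the dgLa of maps ⊕_{m≥1,n≥0} Hom(Λ^m g ⊗ Λ^n h, h) with differential d = ad_{ρ_g+ρ_h} and Nijenhuis–Richardson bracket. Let ψ : g → Der(h) and χ : Λ²g → h, and let c = ψ + χ ∈ L^1 (with ψ regarded as an element of Hom(g⊗h,h)). Then c satisfies the Maurer–Cartan equation dc + ½[c,c] = 0 if and only if (χ,ψ) is a nonabelian 2-cocycle, i.e. [ψ(a),ψ(b)] = ψ([a,b]) + ad_h(χ(a∧b)) and ∑_cyclic(ψ_a χ(b∧c') − χ([a,b]∧c')) = 0, and additionally each ψ_a is a derivation of h. -/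
variable {K : Type} [Field K] {V : Type} [AddCommGroup V] [Module K V]

/-- The Nijenhuis–Richardson insertion `i_P Q` of a `(p+1)`-cochain `P` into a
`(q+1)`-cochain `Q`:
`i_P Q (l₀,…,l_{p+q}) = ∑_{σ} sign(σ) Q(P(l_{σ(0)},…,l_{σ(p)}), l_{σ(p+1)},…,l_{σ(p+q)})`,
the sum running over the `(p+1,q)`-unshuffles `σ`, i.e. the permutations of
`{0,…,p+q}` which are increasing on `{0,…,p}` and on `{p+1,…,p+q}`. -/
def nrIns (p q : ℕ) (P : (Fin (p + 1) → V) → V) (Q : (Fin (q + 1) → V) → V) :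
    (Fin (p + q + 1) → V) → V := fun v =>
  ∑ σ ∈ Finset.univ.filter (fun σ : Equiv.Perm (Fin (p + q + 1)) =>
      ∀ i j : Fin (p + q + 1), i < j → ((j : ℕ) ≤ p ∨ p < (i : ℕ)) → σ i < σ j),
    (Equiv.Perm.sign σ : ℤ) •
      Q (Fin.cons (P (fun i : Fin (p + 1) => v (σ (Fin.castLE (by omega) i))))
         (fun j : Fin q => v (σ (Fin.cast (by omega) (Fin.natAdd (p + 1) j)))))

/-- The Nijenhuis–Richardson bracket `[P,Q] = i_P Q − (−1)^{pq} i_Q P` of cochains of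
degrees `p` and `q` (arities `p+1` and `q+1`). -/
def nrBr (p q : ℕ) (P : (Fin (p + 1) → V) → V) (Q : (Fin (q + 1) → V) → V) :
    (Fin (p + q + 1) → V) → V := fun v =>
  nrIns p q P Q v -
    ((-1 : ℤ) ^ (p * q)) • nrIns q p Q P (fun i : Fin (q + p + 1) => v (Fin.cast (by omega) i))

lemma nrIns11 (P Q : (Fin 2 → V) → V) (v : Fin 3 → V) :
    nrIns 1 1 P Q v =
      Q ![P ![v 0, v 1], v 2] - Q ![P ![v 0, v 2], v 1] + Q ![P ![v 1, v 2], v 0] := by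
  have hterm : ∀ σ : Equiv.Perm (Fin 3),
      (Fin.cons (P (fun i : Fin 2 => v (σ (Fin.castLE (by omega) i))))
         (fun j : Fin 1 => v (σ (Fin.cast (by omega) (Fin.natAdd 2 j)))) : Fin 2 → V)
        = ![P ![v (σ 0), v (σ 1)], v (σ 2)] := by
    intro σ
    funext i
    fin_cases i
    · show P _ = P _
      congr 1
      funext i; fin_cases i <;> rfl
    · rfl
  rw [nrIns]
  rw [show (Finset.univ.filter (fun σ : Equiv.Perm (Fin 3) =>
      ∀ i j : Fin 3, i < j → ((j : ℕ) ≤ 1 ∨ 1 < (i : ℕ)) → σ i < σ j))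
    = {Equiv.refl _, Equiv.swap 1 2, finRotate 3} from by decide]
  rw [Finset.sum_insert (by decide), Finset.sum_insert (by decide), Finset.sum_singleton]
  rw [hterm, hterm, hterm]
  rw [show (Equiv.Perm.sign (Equiv.refl (Fin 3)) : ℤ) = 1 from by decide,
      show (Equiv.Perm.sign (Equiv.swap (1:Fin 3) 2) : ℤ) = -1 from by decide,
      show (Equiv.Perm.sign (finRotate 3) : ℤ) = 1 from by decide]
  rw [show (Equiv.swap (1:Fin 3) 2) 0 = 0 from by decide,
      show (Equiv.swap (1:Fin 3) 2) 1 = 2 from by decide,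
      show (Equiv.swap (1:Fin 3) 2) 2 = 1 from by decide,
      show (finRotate 3) (0:Fin 3) = 1 from by decide,
      show (finRotate 3) (1:Fin 3) = 2 from by decide,
      show (finRotate 3) (2:Fin 3) = 0 from by decide]
  simp only [Equiv.refl_apply, one_smul, neg_one_smul]
  abel

lemma nrBr11 (P Q : (Fin 2 → V) → V) (v : Fin 3 → V) :
    nrBr 1 1 P Q v = nrIns 1 1 P Q v + nrIns 1 1 Q P v := by
  have hv : (fun i : Fin (1 + 1 + 1) => v (Fin.cast (by omega) i)) = v := by
    funext i; exact congrArg v (Fin.ext rfl)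
  rw [nrBr, hv]
  norm_num

/- STATEMENT 14: for ψ : g → End(h) and χ : Λ²g → h, the element c = ψ + χ ∈ L¹
   satisfies the Maurer–Cartan equation dc + ½[c,c] = 0 in the dgLa
   L = ⊕_{m≥1,n≥0} Hom(Λ^m g ⊗ Λ^n h, h) (with d = ad_{ρ_g+ρ_h} and the
   Nijenhuis–Richardson bracket) iff (χ,ψ) is a nonabelian 2-cocycle and each ψ_a is
   a derivation of h. -/
theorem maurer_cartan_iff_nonabelian_cocycle
    (K : Type) [Field K] [CharZero K]
    (g : Type) [LieRing g] [LieAlgebra K g]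
    (h : Type) [LieRing h] [LieAlgebra K h]
    (ψ : g →ₗ[K] h →ₗ[K] h)
    (χ : g →ₗ[K] g →ₗ[K] h) (hχalt : ∀ a : g, χ a a = 0)
    (ρ : (Fin 2 → g × h) → g × h)
    (hρ : ∀ w : Fin 2 → g × h, ρ w = (⁅(w 0).1, (w 1).1⁆, ⁅(w 0).2, (w 1).2⁆))
    (c : (Fin 2 → g × h) → g × h)
    (hc : ∀ v : Fin 2 → g × h,
      c v = (0, χ (v 0).1 (v 1).1 + ψ (v 0).1 (v 1).2 - ψ (v 1).1 (v 0).2)) :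
    -- the Maurer–Cartan equation d c + ½ [c,c] = 0:
    (∀ v : Fin 3 → g × h,
      nrBr 1 1 ρ c v + (2 : K)⁻¹ • nrBr 1 1 c c v = 0) ↔
    -- (χ,ψ) is a nonabelian 2-cocycle and each ψ_a is a derivation of h:
    ((∀ (a b : g) (x : h),
        ψ a (ψ b x) - ψ b (ψ a x) = ψ ⁅a, b⁆ x + ⁅χ a b, x⁆) ∧
     (∀ a b e : g,
        (ψ a (χ b e) - χ ⁅a, b⁆ e) + (ψ b (χ e a) - χ ⁅b, e⁆ a)
          + (ψ e (χ a b) - χ ⁅e, a⁆ b) = 0) ∧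
     (∀ (a : g) (x y : h), ψ a ⁅x, y⁆ = ⁅ψ a x, y⁆ + ⁅x, ψ a y⁆)) := by
  set E : g → g → g → h → h → h → h := fun a0 a1 a2 x0 x1 x2 =>
    ((χ ⁅a0,a1⁆ a2 + ψ ⁅a0,a1⁆ x2 - ψ a2 ⁅x0,x1⁆)
      - (χ ⁅a0,a2⁆ a1 + ψ ⁅a0,a2⁆ x1 - ψ a1 ⁅x0,x2⁆)
      + (χ ⁅a1,a2⁆ a0 + ψ ⁅a1,a2⁆ x0 - ψ a0 ⁅x1,x2⁆))
    + (⁅χ a0 a1 + ψ a0 x1 - ψ a1 x0, x2⁆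
      - ⁅χ a0 a2 + ψ a0 x2 - ψ a2 x0, x1⁆
      + ⁅χ a1 a2 + ψ a1 x2 - ψ a2 x1, x0⁆)
    + (- ψ a2 (χ a0 a1 + ψ a0 x1 - ψ a1 x0)
      + ψ a1 (χ a0 a2 + ψ a0 x2 - ψ a2 x0)
      - ψ a0 (χ a1 a2 + ψ a1 x2 - ψ a2 x1)) with hE
  have half : ∀ y : g × h, (2 : K)⁻¹ • (y + y) = y := by
    intro y
    rw [← two_smul K y, smul_smul, inv_mul_cancel₀ (two_ne_zero), one_smul]
  have hMC : ∀ v : Fin 3 → g × h,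
      nrBr 1 1 ρ c v + (2 : K)⁻¹ • nrBr 1 1 c c v
        = (0, E (v 0).1 (v 1).1 (v 2).1 (v 0).2 (v 1).2 (v 2).2) := by
    intro v
    rw [nrBr11, nrBr11, half]
    rw [nrIns11, nrIns11, nrIns11]
    simp only [hρ, hc, Matrix.cons_val_zero, Matrix.cons_val_one, Matrix.head_cons, hE]
    ext
    · simp
    · simp only [Prod.snd_add, Prod.snd_sub]
      simp only [map_zero, LinearMap.zero_apply, zero_add, zero_sub, sub_zero]
      abel
  have hχskew : ∀ a b : g, χ b a = -χ a b := by
    intro a b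
    have H := hχalt (a + b)
    simp only [map_add, LinearMap.add_apply, hχalt] at H
    have H' : χ a b + χ b a = 0 := by rw [← H]; abel
    exact eq_neg_of_add_eq_zero_right H'
  have hlskew : ∀ a b : g, (⁅b, a⁆ : g) = -⁅a, b⁆ := fun a b => (lie_skew b a).symm
  constructor
  · intro hm
    have hz : ∀ (a0 a1 a2 : g) (x0 x1 x2 : h), E a0 a1 a2 x0 x1 x2 = 0 := by
      intro a0 a1 a2 x0 x1 x2
      have H := hm ![(a0, x0), (a1, x1), (a2, x2)]
      rw [hMC] at H
      simpa using congrArg Prod.snd H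
    refine ⟨?_, ?_, ?_⟩
    · intro a b x
      have T := hz a b 0 0 0 x
      rw [hE] at T
      simp only [lie_zero, zero_lie, map_zero, LinearMap.zero_apply, LinearMap.map_zero,
        add_zero, zero_add, sub_zero, zero_sub, neg_zero, lie_self] at T
      have T2 := neg_eq_zero.mpr T
      rw [← sub_eq_zero, ← T2]
      abel
    · intro a b e
      have T := hz a b e 0 0 0
      rw [hE] at T
      simp only [lie_zero, zero_lie, map_zero, LinearMap.zero_apply, LinearMap.map_zero,
        add_zero, zero_add, sub_zero, zero_sub, neg_zero, lie_self] at T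
      rw [hχskew a e, hlskew a e, map_neg, map_neg, LinearMap.neg_apply]
      have T2 := neg_eq_zero.mpr T
      rw [← T2]
      abel
    · intro a x y
      have T := hz a 0 0 0 x y
      rw [hE] at T
      simp only [lie_zero, zero_lie, map_zero, LinearMap.zero_apply, LinearMap.map_zero,
        add_zero, zero_add, sub_zero, zero_sub, neg_zero, lie_self] at T
      rw [show (⁅x, ψ a y⁆ : h) = -⁅ψ a y, x⁆ from (lie_skew _ _).symm]
      have T2 := neg_eq_zero.mpr T
      rw [← sub_eq_zero, ← T2]
      abel
  · rintro ⟨h1, h2, hder⟩ v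
    rw [hMC]
    rw [Prod.mk_eq_zero]
    refine ⟨rfl, ?_⟩
    rw [hE]
    set a0 := (v 0).1; set a1 := (v 1).1; set a2 := (v 2).1
    set x0 := (v 0).2; set x1 := (v 1).2; set x2 := (v 2).2
    show ((χ ⁅a0,a1⁆ a2 + ψ ⁅a0,a1⁆ x2 - ψ a2 ⁅x0,x1⁆)
      - (χ ⁅a0,a2⁆ a1 + ψ ⁅a0,a2⁆ x1 - ψ a1 ⁅x0,x2⁆)
      + (χ ⁅a1,a2⁆ a0 + ψ ⁅a1,a2⁆ x0 - ψ a0 ⁅x1,x2⁆))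
    + (⁅χ a0 a1 + ψ a0 x1 - ψ a1 x0, x2⁆
      - ⁅χ a0 a2 + ψ a0 x2 - ψ a2 x0, x1⁆
      + ⁅χ a1 a2 + ψ a1 x2 - ψ a2 x1, x0⁆)
    + (- ψ a2 (χ a0 a1 + ψ a0 x1 - ψ a1 x0)
      + ψ a1 (χ a0 a2 + ψ a0 x2 - ψ a2 x0)
      - ψ a0 (χ a1 a2 + ψ a1 x2 - ψ a2 x1)) = 0
    have hcomm : ∀ (a b : g) (x : h),
        ψ a (ψ b x) = (ψ ⁅a,b⁆ x + ⁅χ a b, x⁆) + ψ b (ψ a x) :=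
      fun a b x => sub_eq_iff_eq_add.mp (h1 a b x)
    have T := h2 a0 a1 a2
    rw [hχskew a0 a2, hlskew a0 a2, map_neg, map_neg, LinearMap.neg_apply] at T
    simp only [map_add, map_sub, LinearMap.add_apply, LinearMap.sub_apply,
      add_lie, sub_lie]
    rw [hder a2 x0 x1, hder a1 x0 x2, hder a0 x1 x2]
    rw [hcomm a2 a0 x1, hcomm a2 a1 x0, hcomm a1 a0 x2]
    rw [hχskew a0 a2, hχskew a1 a2, hχskew a0 a1]
    rw [hlskew a0 a2, hlskew a1 a2, hlskew a0 a1]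
    simp only [map_neg, LinearMap.neg_apply, neg_lie]
    rw [show (⁅x0, ψ a2 x1⁆ : h) = -⁅ψ a2 x1, x0⁆ from (lie_skew _ _).symm,
        show (⁅x0, ψ a1 x2⁆ : h) = -⁅ψ a1 x2, x0⁆ from (lie_skew _ _).symm,
        show (⁅x1, ψ a0 x2⁆ : h) = -⁅ψ a0 x2, x1⁆ from (lie_skew _ _).symm]
    have T2 := neg_eq_zero.mpr T
    rw [← T2]
    abel
end

section
/- Let g, h be Lie algebras and β : g → h linear, regarded as a degree-0 element of the dgLa L = ⊕_{m≥1,n≥0} Hom(Λ^m g ⊗ Λ^n h, h) with differential d = ad_{ρ_g} + ad_{ρ_h}. Then ad_β²(dβ) = 0, and the gauge term g_β = −∑_{n≥0}(1/(n+1)!) ad_β^n(dβ) evaluates on e_i = g_i + h_i as g_β(e₁,e₂) = −β([g₁,g₂]_g) + [β(g₁),h₂]_h + [h₁,β(g₂)]_h + [β(g₁),β(g₂)]_h. -/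
variable {K : Type} [Field K] {V : Type} [AddCommGroup V] [Module K V]

lemma cons0 (a : V) (f : Fin 0 → V) : (Fin.cons a f : Fin 1 → V) = fun _ => a := by
  funext i
  have : i = 0 := Fin.ext (by omega)
  rw [this, Fin.cons_zero]

lemma ins10 (P : (Fin 2 → V) → V) (Q : (Fin 1 → V) → V) (v : Fin 2 → V) :
    nrIns 1 0 P Q v = Q (fun _ => P v) := by
  unfold nrIns
  rw [show (Finset.univ.filter (fun σ : Equiv.Perm (Fin 2) =>
      ∀ i j : Fin 2, i < j → ((j : ℕ) ≤ 1 ∨ 1 < (i : ℕ)) → σ i < σ j)) = {1} from by decide]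
  rw [Finset.sum_singleton]
  simp only [Equiv.Perm.sign_one, Units.val_one, one_smul, Equiv.Perm.one_apply]
  rw [cons0]
  congr 1

lemma ins01 (P : (Fin 1 → V) → V) (Q : (Fin 2 → V) → V) (v : Fin 2 → V) :
    nrIns 0 1 P Q v =
      Q (Fin.cons (P fun _ => v 0) (fun _ => v 1)) -
      Q (Fin.cons (P fun _ => v 1) (fun _ => v 0)) := by
  unfold nrIns
  rw [show (Finset.univ.filter (fun σ : Equiv.Perm (Fin 2) =>
      ∀ i j : Fin 2, i < j → ((j : ℕ) ≤ 0 ∨ 0 < (i : ℕ)) → σ i < σ j)) = {1, Equiv.swap 0 1}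
      from by decide]
  rw [Finset.sum_pair (by decide)]
  have key : ∀ σ : Equiv.Perm (Fin 2),
      Q (Fin.cons (P (fun i : Fin 1 => v (σ (Fin.castLE (by omega) i))))
         (fun j : Fin 1 => v (σ (Fin.cast (by omega) (Fin.natAdd 1 j))))) =
      Q (Fin.cons (P fun _ => v (σ 0)) (fun _ => v (σ 1))) := by
    intro σ
    congr 1
    funext i
    refine Fin.cases ?_ (fun j => ?_) i
    · rw [Fin.cons_zero, Fin.cons_zero]
      congr 1
      funext k
      have : k = 0 := Fin.ext (by omega)
      rw [this]
      exact congrArg v (congrArg σ (by decide))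
    · rw [Fin.cons_succ, Fin.cons_succ]
      have : j = 0 := Fin.ext (by omega)
      rw [this]
      exact congrArg v (congrArg σ (by decide))
  rw [key 1, key (Equiv.swap 0 1)]
  simp only [Equiv.Perm.sign_one, Units.val_one, one_smul, Equiv.Perm.one_apply,
    Equiv.Perm.sign_swap (by decide : (0 : Fin 2) ≠ 1), Equiv.swap_apply_left,
    Equiv.swap_apply_right, Units.val_neg, neg_smul, one_smul]
  abel

lemma veq (v : Fin 2 → V) (h : (0:ℕ)+1+1 = 1+0+1) :
    (fun i : Fin (0+1+1) => v (Fin.cast (by omega) i)) = v := by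
  funext i; exact congrArg v (Fin.ext rfl)

lemma br10 (P : (Fin 2 → V) → V) (Q : (Fin 1 → V) → V) (v : Fin 2 → V) :
    nrBr 1 0 P Q v = Q (fun _ => P v) -
      (P (Fin.cons (Q fun _ => v 0) (fun _ => v 1)) -
       P (Fin.cons (Q fun _ => v 1) (fun _ => v 0))) := by
  unfold nrBr
  rw [ins10]
  norm_num
  rw [ins01]

lemma br01 (P : (Fin 1 → V) → V) (Q : (Fin 2 → V) → V) (v : Fin 2 → V) :
    nrBr 0 1 P Q v =
      (Q (Fin.cons (P fun _ => v 0) (fun _ => v 1)) -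
       Q (Fin.cons (P fun _ => v 1) (fun _ => v 0))) - P (fun _ => Q v) := by
  unfold nrBr
  rw [ins01]
  norm_num
  rw [ins10]

lemma consval1 (a b : V) : (Fin.cons a (fun _ : Fin 1 => b) : Fin 2 → V) 1 = b := rfl


/- STATEMENT 19: for β : g → h regarded as a degree-0 element of the dgLa
   L = ⊕_{m≥1,n≥0} Hom(Λ^m g ⊗ Λ^n h, h) with d = ad_{ρ_g+ρ_h}, one has
   ad_β²(dβ) = 0, and the gauge term g_β = −∑ (1/(n+1)!) ad_β^n(dβ) = −dβ − ½[β,dβ]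
   evaluates on eᵢ = gᵢ + hᵢ as
   g_β(e₁,e₂) = −β[g₁,g₂] + [βg₁,h₂] + [h₁,βg₂] + [βg₁,βg₂]. -/
theorem gauge_term_evaluation
    (K : Type) [Field K] [CharZero K]
    (g : Type) [LieRing g] [LieAlgebra K g]
    (h : Type) [LieRing h] [LieAlgebra K h]
    (β : g →ₗ[K] h)
    -- β as a 1-cochain on g ⊕ h with values in h:
    (B : (Fin 1 → g × h) → g × h)
    (hB : ∀ v : Fin 1 → g × h, B v = (0, β (v 0).1))
    -- ρ = ρ_g + ρ_h, so that dβ = [ρ, β]: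
    (ρ : (Fin 2 → g × h) → g × h)
    (hρ : ∀ w : Fin 2 → g × h, ρ w = (⁅(w 0).1, (w 1).1⁆, ⁅(w 0).2, (w 1).2⁆)) :
    -- ad_β²(dβ) = 0:
    (∀ v : Fin 2 → g × h,
      nrBr 0 1 B (nrBr 0 1 B (nrBr 1 0 ρ B)) v = 0) ∧
    -- evaluation of the gauge term g_β = −dβ − ½ [β, dβ]:
    (∀ e : Fin 2 → g × h,
      -(nrBr 1 0 ρ B e) - (2 : K)⁻¹ • nrBr 0 1 B (nrBr 1 0 ρ B) e =
        (0, -β ⁅(e 0).1, (e 1).1⁆ + ⁅β (e 0).1, (e 1).2⁆ + ⁅(e 0).2, β (e 1).1⁆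
              + ⁅β (e 0).1, β (e 1).1⁆)) := by
  have hD : ∀ v : Fin 2 → g × h, nrBr 1 0 ρ B v =
      (0, β ⁅(v 0).1, (v 1).1⁆ - ⁅β (v 0).1, (v 1).2⁆ + ⁅β (v 1).1, (v 0).2⁆) := by
    intro v
    rw [br10]
    simp only [hB, hρ, Fin.cons_zero, consval1]
    simp [Prod.ext_iff]
    abel
  have hE : ∀ v : Fin 2 → g × h, nrBr 0 1 B (nrBr 1 0 ρ B) v =
      (0, - ⁅β (v 0).1, β (v 1).1⁆ - ⁅β (v 0).1, β (v 1).1⁆) := by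
    intro v
    rw [br01]
    simp only [hD, hB, Fin.cons_zero, consval1]
    simp [Prod.ext_iff]
  constructor
  · intro v
    rw [br01]
    simp only [hE, hB, Fin.cons_zero, consval1]
    simp [Prod.ext_iff]
  · intro e
    rw [hD, hE]
    rw [Prod.ext_iff]
    constructor
    · simp
    · simp only [Prod.smul_snd, Prod.snd_neg, Prod.snd_sub, Prod.snd]
      rw [show -⁅β (e 0).1, β (e 1).1⁆ - ⁅β (e 0).1, β (e 1).1⁆
            = -((2:K) • ⁅β (e 0).1, β (e 1).1⁆) from by rw [two_smul]; abel]
      rw [smul_neg, smul_smul, inv_mul_cancel₀ (two_ne_zero), one_smul]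
      rw [← lie_skew ((e 0).2) (β (e 1).1)]
      abel
end
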